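/- arXiv:funct-an/9509001 — 2 statements merged into one kernel-verified Lean document; each statement's English description precedes it below -/
import Mathlib

section
/- Fix k > 0 and ℓ₁, ℓ₂ > 0 with sin(kℓ₁) ≠ 0 and sin(kℓ₂) ≠ 0. For v₁, v₂ ∈ [−1,1] define F(k; v₁, v₂) = (v₁ − cos kℓ₁)/sin kℓ₁ + (v₂ − cos kℓ₂)/sin kℓ₂. Then the maximum of F over v₁, v₂ ∈ [−1,1] equals tan(kℓ₁/2 − (π/2)⌊kℓ₁/π⌋) + tan(kℓ₂/2 − (π/2)⌊kℓ₂/π⌋). -/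
open Real Set

lemma delta_aux (x : ℝ) (hx : Real.sin x ≠ 0) :
    IsGreatest ((fun v : ℝ => (v - Real.cos x) / Real.sin x) '' Icc (-1 : ℝ) 1)
      (Real.tan (x / 2 - (π / 2) * ⌊x / π⌋)) := by
  have hπ := Real.pi_pos
  set n : ℤ := ⌊x / π⌋ with hn
  set t : ℝ := x / 2 - (π / 2) * n with ht
  have h1 : (n : ℝ) * π ≤ x := by
    have := Int.floor_le (x / π)
    rw [← hn] at this
    calc (n:ℝ) * π ≤ (x/π) * π := by nlinarith
    _ = x := by field_simp
  have h1' : (n : ℝ) * π < x := by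
    rcases lt_or_eq_of_le h1 with h | h
    · exact h
    · exfalso; apply hx; rw [← h]
      simpa using Real.sin_int_mul_pi n
  have h2 : x < ((n : ℝ) + 1) * π := by
    have := Int.lt_floor_add_one (x / π)
    rw [← hn] at this
    calc x = (x/π) * π := by field_simp
    _ < ((n:ℝ)+1) * π := by nlinarith
  have ht0 : 0 < t := by rw [ht]; nlinarith
  have ht1 : t < π / 2 := by rw [ht]; nlinarith
  have hcost : 0 < Real.cos t := Real.cos_pos_of_mem_Ioo ⟨by linarith, ht1⟩
  have hsint : 0 < Real.sin t := Real.sin_pos_of_pos_of_lt_pi ht0 (ht1.trans (by linarith))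
  have hsin2 : 0 < Real.sin (2 * t) := by
    rw [Real.sin_two_mul]; positivity
  have hx2 : x = 2 * t + n * π := by rw [ht]; ring
  have hpyth := Real.sin_sq_add_cos_sq t
  have hkey : Real.tan t = (1 - Real.cos (2 * t)) / Real.sin (2 * t) := by
    rw [Real.tan_eq_sin_div_cos, Real.cos_two_mul, Real.sin_two_mul]
    rw [div_eq_div_iff hcost.ne' (by positivity)]
    nlinarith
  rcases Int.even_or_odd n with ⟨m, hm⟩ | ⟨m, hm⟩
  · have hsx : Real.sin x = Real.sin (2 * t) := by
      rw [hx2, hm]; push_cast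
      rw [show (2*t + ((m:ℝ)+(m:ℝ))*π) = 2*t + (m:ℝ)*(2*π) by ring]
      exact_mod_cast Real.sin_add_int_mul_two_pi (2*t) m
    have hcx : Real.cos x = Real.cos (2 * t) := by
      rw [hx2, hm]; push_cast
      rw [show (2*t + ((m:ℝ)+(m:ℝ))*π) = 2*t + (m:ℝ)*(2*π) by ring]
      exact_mod_cast Real.cos_add_int_mul_two_pi (2*t) m
    constructor
    · refine ⟨1, ⟨by norm_num, le_refl 1⟩, ?_⟩
      simp only [hsx, hcx, hkey]
    · rintro y ⟨v, ⟨hv1, hv2⟩, rfl⟩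
      simp only [hsx, hcx, hkey]
      gcongr
  · have hsx : Real.sin x = -Real.sin (2 * t) := by
      rw [hx2, hm]; push_cast
      rw [show (2*t + (2*(m:ℝ)+1)*π) = (2*t + π) + (m:ℝ)*(2*π) by ring]
      rw [show ((m:ℝ)*(2*π)) = ((m:ℤ):ℝ)*(2*π) by norm_num]
      rw [Real.sin_add_int_mul_two_pi, Real.sin_add_pi]
    have hcx : Real.cos x = -Real.cos (2 * t) := by
      rw [hx2, hm]; push_cast
      rw [show (2*t + (2*(m:ℝ)+1)*π) = (2*t + π) + (m:ℝ)*(2*π) by ring]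
      rw [show ((m:ℝ)*(2*π)) = ((m:ℤ):ℝ)*(2*π) by norm_num]
      rw [Real.cos_add_int_mul_two_pi, Real.cos_add_pi]
    constructor
    · refine ⟨-1, ⟨le_refl _, by norm_num⟩, ?_⟩
      simp only [hsx, hcx, hkey]
      rw [div_eq_div_iff (neg_ne_zero.mpr hsin2.ne') hsin2.ne']
      ring
    · rintro y ⟨v, ⟨hv1, hv2⟩, rfl⟩
      simp only [hsx, hcx, hkey]
      rw [show (v - -Real.cos (2*t)) / (-Real.sin (2*t))
          = (-v - Real.cos (2*t)) / Real.sin (2*t) by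
        rw [div_eq_div_iff (neg_ne_zero.mpr hsin2.ne') hsin2.ne']; ring]
      gcongr
      linarith
theorem delta_band_function_max (k l1 l2 : ℝ) (hk : 0 < k) (hl1 : 0 < l1) (hl2 : 0 < l2)
    (h1 : Real.sin (k * l1) ≠ 0) (h2 : Real.sin (k * l2) ≠ 0) :
    IsGreatest
      ((fun p : ℝ × ℝ => (p.1 - Real.cos (k * l1)) / Real.sin (k * l1)
          + (p.2 - Real.cos (k * l2)) / Real.sin (k * l2)) ''
        (Icc (-1 : ℝ) 1 ×ˢ Icc (-1 : ℝ) 1))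
      (Real.tan (k * l1 / 2 - (π / 2) * ⌊k * l1 / π⌋)
        + Real.tan (k * l2 / 2 - (π / 2) * ⌊k * l2 / π⌋)) := by
  obtain ⟨⟨v1, hm1, he1⟩, hub1⟩ := delta_aux (k * l1) h1
  obtain ⟨⟨v2, hm2, he2⟩, hub2⟩ := delta_aux (k * l2) h2
  constructor
  · exact ⟨(v1, v2), ⟨hm1, hm2⟩, by simp only at he1 he2 ⊢; rw [he1, he2]⟩
  · rintro y ⟨⟨w1, w2⟩, ⟨hw1, hw2⟩, rfl⟩
    exact add_le_add (hub1 ⟨w1, hw1, rfl⟩) (hub2 ⟨w2, hw2, rfl⟩)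
end

section
/- Let θ > 0 be irrational. Then there exist sequences of positive integers (nᵣ) and (mᵣ) with nᵣ → ∞ such that |nᵣθ − mᵣ| < 1/(√5 · nᵣ) for all r. -/
/-!
If `θ = [a₀; a₁, a₂, …]` has complete quotients `xₙ` and convergents `pₙ/qₙ`, then
`|qₙθ - pₙ| = 1 / (qₙxₙ₊₁ + qₙ₋₁)`, so `pₙ/qₙ` misses the bound exactly when
`xₙ₊₁ + qₙ₋₁/qₙ ≤ √5`. As `xₙ₊₁ + qₙ₋₁/qₙ = 1/xₙ₊₂ + qₙ₊₁/qₙ`, two consecutive misses give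
`u + v ≤ √5` and `1/u + 1/v ≤ √5` for `u = xₙ₊₂`, `v = qₙ/qₙ₊₁`; multiplying the two bounds on
`u` and `1/u` yields `v + 1/v ≤ √5`, i.e. `v > φ⁻¹` (strictly, as `v` is rational). A third
consecutive miss would also give `qₙ₊₁/qₙ₊₂ > φ⁻¹`, contradicting
`qₙ₊₂/qₙ₊₁ = aₙ₊₂ + qₙ/qₙ₊₁ > 1 + φ⁻¹ = φ`. So among any three consecutive convergents one
satisfies the bound.
-/

open Filter
open Real
open scoped goldenRatio

namespace Hurwitz

def continuant (a : ℕ → ℕ) (s₀ s₁ : ℕ) : ℕ → ℕ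
  | 0 => s₀
  | 1 => s₁
  | n + 2 => a (n + 1) * continuant a s₀ s₁ (n + 1) + continuant a s₀ s₁ n

/-- `num a (n + 1) / den a (n + 1)` is the `n`-th convergent `[a 0; a 1, …, a n]`;
index `0` holds `p₋₁ = 1` and `q₋₁ = 0`. -/
def num (a : ℕ → ℕ) : ℕ → ℕ := continuant a 1 (a 0)

def den (a : ℕ → ℕ) : ℕ → ℕ := continuant a 0 1

section Continuant

variable (a : ℕ → ℕ)

lemma continuant_add_two (s₀ s₁ n : ℕ) :
    continuant a s₀ s₁ (n + 2) = a (n + 1) * continuant a s₀ s₁ (n + 1) + continuant a s₀ s₁ n :=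
  rfl

lemma continuant_det (s₀ s₁ t₀ t₁ : ℕ) :
    ∀ n, (continuant a s₀ s₁ (n + 1) * continuant a t₀ t₁ n
        - continuant a s₀ s₁ n * continuant a t₀ t₁ (n + 1) : ℤ) = (-1) ^ n * (s₁ * t₀ - s₀ * t₁)
  | 0 => by simp [continuant]
  | n + 1 => by
    have ih := continuant_det s₀ s₁ t₀ t₁ n
    simp only [continuant_add_two, Nat.cast_add, Nat.cast_mul]
    linear_combination -ih

lemma num_succ_mul_den_sub_num_mul_den_succ (n : ℕ) :
    (num a (n + 1) * den a n - num a n * den a (n + 1) : ℤ) = (-1) ^ (n + 1) := by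
  rw [num, den, continuant_det]
  ring

lemma continuant_mul_add_succ {x : ℕ → ℝ} (s₀ s₁ n : ℕ)
    (hx : x (n + 1) = a (n + 1) + (x (n + 2))⁻¹) (hx₀ : x (n + 2) ≠ 0) :
    continuant a s₀ s₁ (n + 2) * x (n + 2) + continuant a s₀ s₁ (n + 1) =
      x (n + 2) * (continuant a s₀ s₁ (n + 1) * x (n + 1) + continuant a s₀ s₁ n) := by
  rw [continuant_add_two, hx]
  push_cast
  field_simp
  ring

lemma den_add_two (n : ℕ) : den a (n + 2) = a (n + 1) * den a (n + 1) + den a n := rfl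

variable {a}

lemma den_succ_pos (ha : ∀ n, 0 < a (n + 1)) : ∀ n, 0 < den a (n + 1)
  | 0 => one_pos
  | n + 1 => Nat.add_pos_left (Nat.mul_pos (ha n) (den_succ_pos ha n)) _

lemma le_den_succ (ha : ∀ n, 0 < a (n + 1)) : ∀ n, n ≤ den a (n + 1)
  | 0 => Nat.zero_le _
  | 1 => den_succ_pos ha 1
  | n + 2 => by
    rw [den_add_two]
    nlinarith [ha (n + 1), le_den_succ ha (n + 1), den_succ_pos ha n]

def denRatio (a : ℕ → ℕ) (n : ℕ) : ℚ := den a n / den a (n + 1)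

lemma inv_denRatio_succ (ha : ∀ n, 0 < a (n + 1)) (n : ℕ) :
    (denRatio a (n + 1))⁻¹ = a (n + 1) + denRatio a n := by
  have : (den a (n + 1) : ℚ) ≠ 0 := by exact_mod_cast (den_succ_pos ha n).ne'
  rw [denRatio, denRatio, inv_div, den_add_two]
  push_cast
  field_simp

end Continuant

theorem inv_goldenRatio_lt_of_add_le_sqrt_five {u : ℝ} {v : ℚ} (hu : 0 < u) (hv : 0 < v)
    (h₁ : u + v ≤ √5) (h₂ : u⁻¹ + (v : ℝ)⁻¹ ≤ √5) : φ⁻¹ < v := by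
  have hv' : (0 : ℝ) < v := by exact_mod_cast hv
  have hsum : φ + φ⁻¹ = √5 := by rw [inv_goldenRatio]; exact goldenRatio_sub_goldenConj
  have hprod : 1 ≤ (√5 - v) * (√5 - (v : ℝ)⁻¹) :=
    calc 1 = u * u⁻¹ := (mul_inv_cancel₀ hu.ne').symm
      _ ≤ _ := mul_le_mul (by linarith) (by linarith) (by positivity) (by linarith)
  have hvv : (v : ℝ) * (v : ℝ)⁻¹ = 1 := mul_inv_cancel₀ hv'.ne'
  have h5 : √5 * √5 = 5 := mul_self_sqrt (by norm_num)
  have hvsum : v + (v : ℝ)⁻¹ ≤ √5 := by nlinarith [sqrt_pos.2 (by norm_num : (0 : ℝ) < 5)]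
  have hquad : ((v : ℝ) - φ⁻¹) * (v - φ) ≤ 0 := by
    have hφ : φ * φ⁻¹ = 1 := mul_inv_cancel₀ goldenRatio_ne_zero
    have : (v : ℝ) * v + 1 ≤ √5 * v := by nlinarith
    nlinarith
  have hlt : φ⁻¹ < φ := by
    have := one_lt_goldenRatio
    rw [inv_lt_iff_one_lt_mul₀ goldenRatio_pos]
    nlinarith
  have hle : φ⁻¹ ≤ v := by nlinarith
  exact hle.lt_of_ne (goldenRatio_irrational.inv.ne_rat v)

/-- `x n = [a n; a (n + 1), a (n + 2), …]` is an infinite simple continued fraction. -/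
structure IsCFExpansion (a : ℕ → ℕ) (x : ℕ → ℝ) : Prop where
  eq_add_inv : ∀ n, x n = a n + (x (n + 1))⁻¹
  one_lt : ∀ n, 1 < x (n + 1)

namespace IsCFExpansion

variable {a : ℕ → ℕ} {x : ℕ → ℝ} (h : IsCFExpansion a x)
include h

lemma partialQuotient_succ_pos (n : ℕ) : 0 < a (n + 1) := by
  have hinv : (x (n + 2))⁻¹ < 1 := inv_lt_one_of_one_lt₀ (h.one_lt (n + 1))
  have : (0 : ℝ) < a (n + 1) := by linarith [h.eq_add_inv (n + 1), h.one_lt n]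
  exact_mod_cast this

lemma mul_den_eq_num : ∀ n, x 0 * (den a (n + 1) * x (n + 1) + den a n) =
    num a (n + 1) * x (n + 1) + num a n
  | 0 => by
    have hx₁ : x 1 ≠ 0 := (zero_lt_one.trans (h.one_lt 0)).ne'
    change x 0 * ((1 : ℕ) * x 1 + (0 : ℕ)) = (a 0 : ℕ) * x 1 + (1 : ℕ)
    rw [h.eq_add_inv 0]
    push_cast
    field_simp
    ring
  | n + 1 => by
    have hx : x (n + 2) ≠ 0 := (zero_lt_one.trans (h.one_lt (n + 1))).ne'
    rw [den, num, continuant_mul_add_succ a _ _ n (h.eq_add_inv (n + 1)) hx,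
      continuant_mul_add_succ a _ _ n (h.eq_add_inv (n + 1)) hx, ← den, ← num,
      mul_left_comm, mul_den_eq_num n]

lemma den_mul_add_den_pos (n : ℕ) : 0 < (den a (n + 1) : ℝ) * x (n + 1) + den a n := by
  have : (0 : ℝ) < den a (n + 1) := by exact_mod_cast den_succ_pos h.partialQuotient_succ_pos n
  nlinarith [h.one_lt n, (den a n).cast_nonneg (α := ℝ)]

lemma abs_den_mul_sub_num (n : ℕ) :
    |den a (n + 1) * x 0 - num a (n + 1)| = (den a (n + 1) * x (n + 1) + den a n)⁻¹ := by
  have hD := h.den_mul_add_den_pos n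
  have hdet : (num a (n + 1) * den a n - num a n * den a (n + 1) : ℝ) = (-1) ^ (n + 1) := by
    exact_mod_cast num_succ_mul_den_sub_num_mul_den_succ a n
  have hmul : (den a (n + 1) * x 0 - num a (n + 1)) * (den a (n + 1) * x (n + 1) + den a n) =
      (-1) ^ n := by
    linear_combination (den a (n + 1) : ℝ) * h.mul_den_eq_num n - hdet
  refine eq_inv_of_mul_eq_one_left ?_
  rw [← abs_of_pos hD, ← abs_mul, hmul, abs_pow, abs_neg, abs_one, one_pow]

lemma add_denRatio_le_sqrt_five {n : ℕ}
    (hn : 1 / (√5 * den a (n + 1)) ≤ |den a (n + 1) * x 0 - num a (n + 1)|) :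
    x (n + 1) + denRatio a n ≤ √5 := by
  have hq : (0 : ℝ) < den a (n + 1) := by exact_mod_cast den_succ_pos h.partialQuotient_succ_pos n
  have hD := h.den_mul_add_den_pos n
  rw [h.abs_den_mul_sub_num, one_div, inv_le_inv₀ (by positivity) hD] at hn
  calc x (n + 1) + denRatio a n = (den a (n + 1) * x (n + 1) + den a n) / den a (n + 1) := by
        rw [denRatio]; push_cast; field_simp
    _ ≤ √5 := (div_le_iff₀ hq).2 (by linarith)

lemma inv_goldenRatio_lt_denRatio_succ {n : ℕ} (hn : x (n + 1) + denRatio a n ≤ √5)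
    (hn' : x (n + 2) + denRatio a (n + 1) ≤ √5) : φ⁻¹ < denRatio a (n + 1) := by
  have hpos : 0 < denRatio a (n + 1) := by
    have := den_succ_pos h.partialQuotient_succ_pos
    rw [denRatio]; exact div_pos (by exact_mod_cast this n) (by exact_mod_cast this (n + 1))
  refine inv_goldenRatio_lt_of_add_le_sqrt_five (zero_lt_one.trans (h.one_lt (n + 1))) hpos hn' ?_
  rw [← Rat.cast_inv, inv_denRatio_succ h.partialQuotient_succ_pos]
  push_cast
  linarith [h.eq_add_inv (n + 1)]

lemma exists_le_abs_den_mul_sub_num_lt (k : ℕ) :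
    ∃ j, k ≤ j ∧ |den a (j + 1) * x 0 - num a (j + 1)| < 1 / (√5 * den a (j + 1)) := by
  by_contra! hbad
  have hle i (hi : k ≤ i) := h.add_denRatio_le_sqrt_five (hbad i hi)
  have h₁ := h.inv_goldenRatio_lt_denRatio_succ (hle k le_rfl) (hle (k + 1) (by omega))
  have h₂ := h.inv_goldenRatio_lt_denRatio_succ (hle (k + 1) (by omega)) (hle (k + 2) (by omega))
  have hpos : (0 : ℝ) < denRatio a (k + 2) := (inv_pos.2 goldenRatio_pos).trans h₂
  have hinv : ((denRatio a (k + 2) : ℝ))⁻¹ = a (k + 2) + denRatio a (k + 1) := by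
    exact_mod_cast congrArg Rat.cast (inv_denRatio_succ h.partialQuotient_succ_pos (k + 1))
  have ha : (1 : ℝ) ≤ a (k + 2) := by exact_mod_cast h.partialQuotient_succ_pos (k + 1)
  have hgold : φ = 1 + φ⁻¹ := by rw [inv_goldenRatio, ← one_sub_goldenRatio]; ring
  have hφ : φ < ((denRatio a (k + 2) : ℝ))⁻¹ := by
    rw [hinv]
    linarith
  linarith [(lt_inv_comm₀ hpos goldenRatio_pos).2 hφ]

end IsCFExpansion

noncomputable def completeQuotient (θ : ℝ) : ℕ → ℝ
  | 0 => θ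
  | n + 1 => (Int.fract (completeQuotient θ n))⁻¹

lemma irrational_completeQuotient {θ : ℝ} (hθ : Irrational θ) :
    ∀ n, Irrational (completeQuotient θ n)
  | 0 => hθ
  | n + 1 => by
    rw [completeQuotient, ← Int.self_sub_floor]
    exact ((irrational_completeQuotient hθ n).sub_intCast _).inv

noncomputable def partialQuotient (θ : ℝ) (n : ℕ) : ℕ := ⌊completeQuotient θ n⌋₊

lemma isCFExpansion_completeQuotient {θ : ℝ} (h₀ : 0 ≤ θ) (hθ : Irrational θ) :
    IsCFExpansion (partialQuotient θ) (completeQuotient θ) where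
  eq_add_inv n := by
    have hnonneg : 0 ≤ completeQuotient θ n := by
      cases n with
      | zero => exact h₀
      | succ n => exact inv_nonneg.2 (Int.fract_nonneg _)
    change _ = _ + ((Int.fract (completeQuotient θ n))⁻¹)⁻¹
    rw [inv_inv, partialQuotient, natCast_floor_eq_intCast_floor hnonneg, Int.floor_add_fract]
  one_lt n := one_lt_inv_iff₀.2
    ⟨Int.fract_pos.2 ((irrational_completeQuotient hθ n).ne_int _), Int.fract_lt_one _⟩

end Hurwitz

theorem hurwitz_sequences (θ : ℝ) (hθ : 0 < θ) (hirr : Irrational θ) :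
    ∃ (n m : ℕ → ℕ), Tendsto (fun r => (n r : ℝ)) atTop atTop ∧
      ∀ r, 0 < n r ∧ |(n r : ℝ) * θ - (m r : ℝ)| < 1 / (Real.sqrt 5 * (n r : ℝ)) := by
  have h := Hurwitz.isCFExpansion_completeQuotient hθ.le hirr
  choose j hj hgood using h.exists_le_abs_den_mul_sub_num_lt
  have hpos := Hurwitz.den_succ_pos h.partialQuotient_succ_pos
  refine ⟨fun r ↦ Hurwitz.den _ (j r + 1), fun r ↦ Hurwitz.num _ (j r + 1), ?_,
    fun r ↦ ⟨hpos (j r), hgood r⟩⟩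
  refine tendsto_atTop_mono (fun r ↦ ?_) tendsto_natCast_atTop_atTop
  exact_mod_cast (hj r).trans (Hurwitz.le_den_succ h.partialQuotient_succ_pos (j r))
end
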